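/- For any RT⊖ policy P and any role A.r, the semantics of A.r under P is contained in its context: ⟦A.r⟧_P ⊆ ⟦A.r⟧_{P+}, where P+ is the context policy of P. -/
import Mathlib


/-! ## Propositional general logic programs and the well-founded semantics -/

/-- A rule of a propositional general logic program over atoms `α`:
a head atom, a finite set of positive body atoms and a finite set of
negative body atoms. -/
structure Rule (α : Type*) where
  head : α
  pos : Finset α
  neg : Finset α

/-- Derivability in the reduct of the program `P` with respect to the set `I`
of atoms assumed true: an atom is derivable if some rule of `P` has it as head,
all negative body atoms avoid `I`, and all positive body atoms are derivable. -/
inductive GammaDer {α : Type*} (P : Set (Rule α)) (I : Set α) : α → Prop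
  | step (r : Rule α) (hr : r ∈ P) (hneg : ∀ b ∈ r.neg, b ∉ I)
      (hpos : ∀ b ∈ r.pos, GammaDer P I b) : GammaDer P I r.head

/-- The Gelfond–Lifschitz operator `Γ_P`. -/
def gamma {α : Type*} (P : Set (Rule α)) (I : Set α) : Set α := { a | GammaDer P I a }

theorem gamma_antitone {α : Type*} (P : Set (Rule α)) : Antitone (gamma P) := by
  intro I J hIJ a ha
  induction ha with
  | step r hr hneg hpos ih =>
      exact GammaDer.step r hr (fun b hb hbI => hneg b hb (hIJ hbI)) ih

/-- The (monotone) square `Γ_P ∘ Γ_P` of the Gelfond–Lifschitz operator. -/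
def gammaSq {α : Type*} (P : Set (Rule α)) : Set α →o Set α :=
  ⟨fun I => gamma P (gamma P I), fun _ _ h => gamma_antitone P (gamma_antitone P h)⟩

/-- The atoms true in the well-founded model of `P`
(the least fixed point of `Γ_P ∘ Γ_P`). -/
def wfTrue {α : Type*} (P : Set (Rule α)) : Set α := OrderHom.lfp (gammaSq P)

/-- The atoms false in the well-founded model of `P`
(the complement of the greatest fixed point `Γ_P(lfp (Γ_P ∘ Γ_P))` of `Γ_P ∘ Γ_P`;
these are exactly the atoms belonging to an unfounded set). -/
def wfFalse {α : Type*} (P : Set (Rule α)) : Set α := (gamma P (wfTrue P))ᶜ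

/-- The atoms undefined in the well-founded model of `P`. -/
def wfUndef {α : Type*} (P : Set (Rule α)) : Set α := (wfTrue P ∪ wfFalse P)ᶜ

/-- Derivability in a negation-free program: rules whose negative body is
nonempty are never applicable. -/
inductive LHDer {α : Type*} (P : Set (Rule α)) : α → Prop
  | step (r : Rule α) (hr : r ∈ P) (hneg : r.neg = ∅)
      (hpos : ∀ b ∈ r.pos, LHDer P b) : LHDer P r.head

/-- The least Herbrand model of a negation-free program: the set of atoms
derivable from the rules (i.e. the least fixed point of its
immediate-consequence operator). -/
def leastModel {α : Type*} (P : Set (Rule α)) : Set α := { a | LHDer P a }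

/-- The positive program `P⁺` obtained from `P` by deleting all negative body
literals from every rule. -/
def posProgram {α : Type*} (P : Set (Rule α)) : Set (Rule α) :=
  (fun r => ⟨r.head, r.pos, ∅⟩) '' P

/-! ## RT⊖ policies and their semantic programs -/

/-- An RT⊖ credential over entities `E` and role names `R`. -/
inductive Credential (E R : Type*) where
  /-- Simple membership `A.r ← D`. -/
  | member (A : E) (r : R) (D : E)
  /-- Simple inclusion `A.r ← B.r1`. -/
  | incl (A : E) (r : R) (B : E) (r1 : R)
  /-- Linking inclusion `A.r ← A.r1.r2`. -/
  | link (A : E) (r r1 r2 : R)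
  /-- Intersection inclusion `A.r ← B1.r1 ∩ B2.r2`. -/
  | inter (A : E) (r : R) (B1 : E) (r1 : R) (B2 : E) (r2 : R)
  /-- Exclusion `A.r ← B1.r1 ⊖ B2.r2`. -/
  | exclusion (A : E) (r : R) (B1 : E) (r1 : R) (B2 : E) (r2 : R)

variable {E R : Type*}

/-- The clauses of the semantic program corresponding to a single credential.
An atom `r(A,B)` is represented as the triple `(r, A, B)`. -/
def clausesOf [DecidableEq E] [DecidableEq R] : Credential E R → Set (Rule (R × E × E))
  | .member A r D => {⟨(r, A, D), ∅, ∅⟩}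
  | .incl A r B r1 => { rl | ∃ Z, rl = ⟨(r, A, Z), {(r1, B, Z)}, ∅⟩ }
  | .link A r r1 r2 => { rl | ∃ Y Z, rl = ⟨(r, A, Z), {(r1, A, Y), (r2, Y, Z)}, ∅⟩ }
  | .inter A r B1 r1 B2 r2 => { rl | ∃ Z, rl = ⟨(r, A, Z), {(r1, B1, Z), (r2, B2, Z)}, ∅⟩ }
  | .exclusion A r B1 r1 B2 r2 => { rl | ∃ Z, rl = ⟨(r, A, Z), {(r1, B1, Z)}, {(r2, B2, Z)}⟩ }

/-- The semantic program `SP(P)` of an RT⊖ policy `P`. -/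
def SP [DecidableEq E] [DecidableEq R] (P : Set (Credential E R)) :
    Set (Rule (R × E × E)) := ⋃ c ∈ P, clausesOf c

/-- The semantics `⟦A.r⟧_P` of the role `A.r`: the set of entities `Z` such
that the atom `r(A,Z)` is true in the well-founded model of `SP(P)`. -/
def roleSem [DecidableEq E] [DecidableEq R] (P : Set (Credential E R)) (A : E) (r : R) :
    Set E := { Z | (r, A, Z) ∈ wfTrue (SP P) }

/-- Replacing an exclusion credential `A.r ← B1.r1 ⊖ B2.r2` by the simple
inclusion `A.r ← B1.r1`; other credentials are unchanged. -/
def contextCred : Credential E R → Credential E R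
  | .exclusion A r B1 r1 _ _ => .incl A r B1 r1
  | c => c

/-- The context policy `P+` of an RT⊖ policy `P`. -/
def contextPolicy (P : Set (Credential E R)) : Set (Credential E R) := contextCred '' P

/-- A credential is an RT0 credential if it is not an exclusion credential. -/
def isRT0 : Credential E R → Prop
  | .exclusion _ _ _ _ _ _ => False
  | _ => True

/-- Every rule of `SP P`, with its negative body deleted, is a rule of
`SP (contextPolicy P)`. -/
lemma posRule_mem_context {E R : Type*} [DecidableEq E] [DecidableEq R]
    (P : Set (Credential E R)) {rl : Rule (R × E × E)} (h : rl ∈ SP P) :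
    (⟨rl.head, rl.pos, ∅⟩ : Rule (R × E × E)) ∈ SP (contextPolicy P) := by
  simp only [SP, Set.mem_iUnion] at h ⊢
  obtain ⟨c, hc, hrl⟩ := h
  cases c with
  | member A r D =>
      refine ⟨.member A r D, ⟨.member A r D, hc, rfl⟩, ?_⟩
      simp only [clausesOf, Set.mem_singleton_iff] at hrl
      subst hrl; rfl
  | incl A r B r1 =>
      refine ⟨.incl A r B r1, ⟨.incl A r B r1, hc, rfl⟩, ?_⟩
      obtain ⟨Z, hZ⟩ := hrl
      subst hZ; exact ⟨Z, rfl⟩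
  | link A r r1 r2 =>
      refine ⟨.link A r r1 r2, ⟨.link A r r1 r2, hc, rfl⟩, ?_⟩
      obtain ⟨Y, Z, hZ⟩ := hrl
      subst hZ; exact ⟨Y, Z, rfl⟩
  | inter A r B1 r1 B2 r2 =>
      refine ⟨.inter A r B1 r1 B2 r2, ⟨.inter A r B1 r1 B2 r2, hc, rfl⟩, ?_⟩
      obtain ⟨Z, hZ⟩ := hrl
      subst hZ; exact ⟨Z, rfl⟩
  | exclusion A r B1 r1 B2 r2 =>
      refine ⟨.incl A r B1 r1, ⟨.exclusion A r B1 r1 B2 r2, hc, rfl⟩, ?_⟩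
      obtain ⟨Z, hZ⟩ := hrl
      subst hZ; exact ⟨Z, rfl⟩

/-- Every rule of the context program has empty negative body. -/
lemma context_neg_empty {E R : Type*} [DecidableEq E] [DecidableEq R]
    (P : Set (Credential E R)) {rl : Rule (R × E × E)}
    (h : rl ∈ SP (contextPolicy P)) : rl.neg = ∅ := by
  simp only [SP, Set.mem_iUnion] at h
  obtain ⟨c, hc, hrl⟩ := h
  have : ∀ c' : Credential E R, (∃ c'' ∈ P, contextCred c'' = c') →
      ∀ rl' ∈ clausesOf (E := E) (R := R) c', rl'.neg = ∅ := by
    rintro c' ⟨c'', _, rfl⟩ rl' hrl'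
    cases c'' <;> simp only [contextCred, clausesOf, Set.mem_singleton_iff,
      Set.mem_setOf_eq] at hrl' <;>
      first
        | (subst hrl'; rfl)
        | (obtain ⟨Z, hZ⟩ := hrl'; subst hZ; rfl)
        | (obtain ⟨Y, Z, hZ⟩ := hrl'; subst hZ; rfl)
  exact this c hc rl hrl

/-- Derivations in `SP P` map into derivations in the context program,
for any assumption sets. -/
lemma gammaDer_to_context {E R : Type*} [DecidableEq E] [DecidableEq R]
    (P : Set (Credential E R)) (I J : Set (R × E × E)) {a : R × E × E}
    (h : GammaDer (SP P) I a) : GammaDer (SP (contextPolicy P)) J a := by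
  induction h with
  | step rl hrl hneg hpos ih =>
      exact GammaDer.step ⟨rl.head, rl.pos, ∅⟩ (posRule_mem_context P hrl)
        (by simp) ih

/-- `gamma` of a negation-free program is independent of the assumption set. -/
lemma gamma_context_const {E R : Type*} [DecidableEq E] [DecidableEq R]
    (P : Set (Credential E R)) (I J : Set (R × E × E)) :
    gamma (SP (contextPolicy P)) I = gamma (SP (contextPolicy P)) J := by
  have key : ∀ (I J : Set (R × E × E)) a, GammaDer (SP (contextPolicy P)) I a →
      GammaDer (SP (contextPolicy P)) J a := by
    intro I J a h
    induction h with
    | step rl hrl hneg hpos ih =>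
        refine GammaDer.step rl hrl ?_ ih
        intro b hb
        rw [context_neg_empty P hrl] at hb
        simp at hb
  ext a
  exact ⟨key I J a, key J I a⟩

/-- the semantics of a role is contained in its context:
`⟦A.r⟧_P ⊆ ⟦A.r⟧_{P+}`. -/
theorem roleSem_subset_context {E R : Type*} [DecidableEq E] [DecidableEq R]
    (P : Set (Credential E R)) (hP : P.Finite) (A : E) (r : R) :
    roleSem P A r ⊆ roleSem (contextPolicy P) A r := by
  set Q := SP (contextPolicy P)
  -- wfTrue Q = gamma Q ∅
  have hfix : wfTrue Q = gammaSq Q (wfTrue Q) := (OrderHom.map_lfp (gammaSq Q)).symm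
  have hQ : wfTrue Q = gamma Q ∅ := by
    rw [hfix]
    show gamma Q (gamma Q (wfTrue Q)) = _
    exact gamma_context_const P _ ∅
  have hle : wfTrue (SP P) ⊆ wfTrue Q := by
    have : gammaSq (SP P) (wfTrue Q) ≤ wfTrue Q := by
      intro a ha
      rw [hQ]
      exact gammaDer_to_context P _ ∅ ha
    exact OrderHom.lfp_le (gammaSq (SP P)) this
  intro Z hZ
  exact hle hZ
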